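/- arXiv:0705.2309 — 8 statements merged into one kernel-verified Lean document; each statement's English description precedes it below -/
import Mathlib

section
/- Let I be a monomial ideal of R = K[t_1,...,t_r] with r ≥ 2, and let I[i] be the ideal obtained from I by setting t_i = 1. Then the saturation of I^n with respect to the maximal ideal satisfies I^n : (t_1,...,t_r)^∞ = ∩_{i=1}^r I[i]^n for all n ≥ 1. -/
/-!
Both sides are monomial ideals, described exponentwise. If `f * t_i ^ k ∈ I ^ n`, then every
exponent of `f` dominates a sum of `n` generator exponents off the coordinate `i`, i.e.
`f ∈ I[i] ^ n`. Conversely, let `B` bound every exponent of every generator. A monomial of total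
degree `r * (n * B) + 1` has some coordinate `i` with exponent above `n * B`, which already covers
the `t_i`-part of any product of `n` generators; so it multiplies `⋂ I[i] ^ n` into `I ^ n`.
-/

theorem Finsupp.sum_update_zero_le_iff {σ ι : Type*} {b : ι → σ →₀ ℕ}
    {s : Finset ι} {i : σ} {m : σ →₀ ℕ} :
    ∑ j ∈ s, (b j).update i 0 ≤ m ↔ ∀ x ≠ i, (∑ j ∈ s, b j) x ≤ m x := by
  classical
  rw [Finsupp.le_def]
  refine forall_congr' fun x => ?_
  by_cases hx : x = i <;> simp [Finsupp.finsetSum_apply, Finsupp.update_apply, hx]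

theorem Finsupp.exists_lt_apply_of_card_mul_lt_degree {σ : Type*} [Fintype σ] {c : σ →₀ ℕ}
    {N : ℕ} (h : Fintype.card σ * N < c.degree) : ∃ i, N < c i := by
  rw [Finsupp.degree_eq_sum, ← smul_eq_mul, ← Finset.card_univ, ← Finset.sum_const] at h
  exact Finset.exists_lt_of_sum_lt h |>.imp fun _ => And.right

namespace MvPolynomial

variable {σ ι R : Type*} [CommSemiring R]

theorem span_range_monomial_pow (a : ι → σ →₀ ℕ) (n : ℕ) :
    Ideal.span (Set.range fun l => monomial (a l) (1 : R)) ^ n =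
      Ideal.span (Set.range fun k : Fin n → ι => monomial (∑ j, a (k j)) (1 : R)) := by
  rw [Ideal.span, Submodule.span_pow]
  congr 1
  ext p
  simp only [Set.mem_pow, Set.mem_range, List.prod_ofFn, monomial_sum_one]
  constructor
  · rintro ⟨f, rfl⟩
    choose k hk using fun j => (f j).2
    exact ⟨k, Finset.prod_congr rfl fun j _ => hk j⟩
  · rintro ⟨k, rfl⟩
    exact ⟨fun j => ⟨_, k j, rfl⟩, rfl⟩

theorem mem_span_range_monomial_pow_iff {a : ι → σ →₀ ℕ} {n : ℕ} {f : MvPolynomial σ R} :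
    f ∈ Ideal.span (Set.range fun l => monomial (a l) (1 : R)) ^ n ↔
      ∀ m ∈ f.support, ∃ k : Fin n → ι, ∑ j, a (k j) ≤ m := by
  rw [span_range_monomial_pow, Set.range_comp' (monomial · 1), mem_ideal_span_monomial_image]
  simp

variable {a : ι → σ →₀ ℕ} {n : ℕ} {f : MvPolynomial σ R} {i : σ}

theorem mem_span_range_monomial_update_pow_iff :
    f ∈ Ideal.span (Set.range fun l => monomial ((a l).update i 0) (1 : R)) ^ n ↔
      ∀ m ∈ f.support, ∃ k : Fin n → ι, ∀ x ≠ i, (∑ j, a (k j)) x ≤ m x := by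
  simp only [mem_span_range_monomial_pow_iff, Finsupp.sum_update_zero_le_iff]

theorem mem_span_range_monomial_update_pow_of_mul_X_pow_mem {k : ℕ}
    (h : f * X i ^ k ∈ Ideal.span (Set.range fun l => monomial (a l) (1 : R)) ^ n) :
    f ∈ Ideal.span (Set.range fun l => monomial ((a l).update i 0) (1 : R)) ^ n := by
  rw [mem_span_range_monomial_pow_iff, X_pow_eq_monomial] at h
  rw [mem_span_range_monomial_update_pow_iff]
  intro m hm
  obtain ⟨k', hk'⟩ := h (m + Finsupp.single i k) <| by
    rwa [mem_support_iff, coeff_mul_monomial, mul_one, ← mem_support_iff]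
  exact ⟨k', fun x hx => by simpa [Finsupp.single_apply, Ne.symm hx] using hk' x⟩

theorem mul_monomial_mem_span_range_monomial_pow {B : ℕ} (hB : ∀ l, a l i ≤ B)
    {c : σ →₀ ℕ} (hc : n * B ≤ c i)
    (hf : f ∈ Ideal.span (Set.range fun l => monomial ((a l).update i 0) (1 : R)) ^ n) :
    f * monomial c 1 ∈ Ideal.span (Set.range fun l => monomial (a l) (1 : R)) ^ n := by
  rw [mem_span_range_monomial_update_pow_iff] at hf
  rw [mem_span_range_monomial_pow_iff]
  intro m hm
  rw [mem_support_iff, coeff_mul_monomial', mul_one] at hm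
  obtain ⟨hcm, hm⟩ : c ≤ m ∧ coeff (m - c) f ≠ 0 := by
    by_cases hcm : c ≤ m <;> simp_all
  obtain ⟨k, hk⟩ := hf (m - c) (mem_support_iff.mpr hm)
  refine ⟨k, Finsupp.le_def.mpr fun x => ?_⟩
  rcases eq_or_ne x i with rfl | hx
  · calc (∑ j, a (k j)) x = ∑ j, a (k j) x := Finsupp.finsetSum_apply _ _ _
      _ ≤ n * B := by simpa using Finset.univ.sum_le_card_nsmul _ _ fun j _ => hB (k j)
      _ ≤ m x := hc.trans (hcm x)
  · exact (hk x hx).trans (tsub_le_self (a := m x))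

end MvPolynomial

open MvPolynomial

theorem stmt_2_general {K : Type*} [Field K] {r s : ℕ}
    (a : Fin s → (Fin r →₀ ℕ)) (n : ℕ) :
    (⨆ k : ℕ,
        Submodule.colon
          ((Ideal.span (Set.range fun i => monomial (a i) (1 : K))) ^ n)
          (((Ideal.span (Set.range fun i : Fin r => (X i : MvPolynomial (Fin r) K))) ^ k :
            Ideal (MvPolynomial (Fin r) K)) : Set (MvPolynomial (Fin r) K))) =
      ⨅ i : Fin r,
        (Ideal.span (Set.range fun k => monomial (Finsupp.update (a k) i 0) (1 : K))) ^ n := by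
  apply le_antisymm
  · refine iSup_le fun k => le_iInf fun i f hf => ?_
    exact mem_span_range_monomial_update_pow_of_mul_X_pow_mem
      (Submodule.mem_colon.mp hf _
        (Ideal.pow_mem_pow (Ideal.subset_span (Set.mem_range_self i)) k))
  · set B := ∑ l, (a l).degree
    have hB : ∀ l i, a l i ≤ B := fun l i =>
      (Finsupp.le_degree i (a l)).trans
        (Finset.single_le_sum (f := fun l => (a l).degree) (fun _ _ => Nat.zero_le _)
          (Finset.mem_univ l))
    refine le_iSup_of_le (r * (n * B) + 1) fun f hf => ?_
    rw [pow_idealOfVars_eq_span, Ideal.colon_span, Submodule.mem_colon]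
    rintro _ ⟨c, hc, rfl⟩
    obtain ⟨i, hi⟩ := Finsupp.exists_lt_apply_of_card_mul_lt_degree (N := n * B) (c := c)
      (by simp_all)
    exact mul_monomial_mem_span_range_monomial_pow (hB · i) hi.le ((Submodule.mem_iInf _).mp hf i)

/-- For a monomial ideal `I` of `K[t_1,…,t_r]` with `r ≥ 2`,
`I^n : (t_1,…,t_r)^∞ = ⋂_{i=1}^r I[i]^n` for all `n ≥ 1`, where `I[i]` is the ideal
obtained from `I` by setting `t_i = 1`. -/
theorem stmt_2 {K : Type*} [Field K] {r s : ℕ} (hr : 2 ≤ r)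
    (a : Fin s → (Fin r →₀ ℕ)) (n : ℕ) (hn : 1 ≤ n) :
    (⨆ k : ℕ,
        Submodule.colon
          ((Ideal.span (Set.range fun i => monomial (a i) (1 : K))) ^ n)
          (((Ideal.span (Set.range fun i : Fin r => (X i : MvPolynomial (Fin r) K))) ^ k :
            Ideal (MvPolynomial (Fin r) K)) : Set (MvPolynomial (Fin r) K))) =
      ⨅ i : Fin r,
        (Ideal.span (Set.range fun k => monomial (Finsupp.update (a k) i 0) (1 : K))) ^ n :=
  stmt_2_general a n
end

section
/- Let I be a monomial ideal of R = K[t_1,...,t_r]. For each n ≥ 1 and each i = 1, ..., r, one has I^n : t_i^∞ = I[i]^n, where I[i] is the ideal obtained from I by setting t_i = 1. -/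
open MvPolynomial

namespace Stmt3Aux

variable {K : Type*} [Field K] {r : ℕ}

open Pointwise

lemma update_apply0 (c : Fin r →₀ ℕ) (i j : Fin r) :
    (Finsupp.update c i 0) j = if j = i then 0 else c j := by
  classical
  rw [Finsupp.coe_update, Function.update_apply]

/-- n-fold pointwise sumset -/
def sumPow (S : Set (Fin r →₀ ℕ)) : ℕ → Set (Fin r →₀ ℕ)
  | 0 => {0}
  | n + 1 => S + sumPow S n

lemma image_add (S T : Set (Fin r →₀ ℕ)) :
    (fun c => monomial c (1 : K)) '' (S + T) =
      ((fun c => monomial c (1 : K)) '' S) * ((fun c => monomial c (1 : K)) '' T) := by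
  ext x
  constructor
  · rintro ⟨c, ⟨s, hs, t, ht, rfl⟩, rfl⟩
    exact ⟨_, ⟨s, hs, rfl⟩, _, ⟨t, ht, rfl⟩, by simp [monomial_mul]⟩
  · rintro ⟨-, ⟨s, hs, rfl⟩, -, ⟨t, ht, rfl⟩, rfl⟩
    exact ⟨s + t, ⟨s, hs, t, ht, rfl⟩, by simp [monomial_mul]⟩

lemma span_pow (S : Set (Fin r →₀ ℕ)) (n : ℕ) :
    (Ideal.span ((fun c => monomial c (1 : K)) '' S)) ^ n =
      Ideal.span ((fun c => monomial c (1 : K)) '' sumPow S n) := by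
  induction n with
  | zero =>
      simp only [pow_zero, sumPow, Set.image_singleton, monomial_zero',
        MvPolynomial.C_1, Ideal.span_singleton_one, Ideal.one_eq_top]
  | succ n ih =>
      rw [pow_succ, ih, Ideal.span_mul_span', sumPow, image_add, mul_comm]

lemma update_add (c d : Fin r →₀ ℕ) (i : Fin r) :
    Finsupp.update (c + d) i 0 = Finsupp.update c i 0 + Finsupp.update d i 0 := by
  ext j
  by_cases h : j = i <;> simp [update_apply0, h]

lemma update_add_single (c : Fin r →₀ ℕ) (i : Fin r) :
    Finsupp.update c i 0 + Finsupp.single i (c i) = c := by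
  ext j
  by_cases h : j = i
  · subst h; simp [update_apply0, Finsupp.single_apply]
  · simp [update_apply0, Finsupp.single_apply, h, (Ne.symm h : ¬ i = j)]

lemma mem_sumPow_update {s : ℕ} (a : Fin s → (Fin r →₀ ℕ)) (i : Fin r) (n : ℕ)
    (b : Fin r →₀ ℕ) (hb : b ∈ sumPow (Set.range a) n) :
    Finsupp.update b i 0 ∈ sumPow (Set.range fun k => Finsupp.update (a k) i 0) n := by
  induction n generalizing b with
  | zero =>
      simp only [sumPow, Set.mem_singleton_iff] at hb ⊢
      subst hb
      ext j
      by_cases h : j = i <;> simp [update_apply0, h]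
  | succ n ih =>
      obtain ⟨t, ⟨k, rfl⟩, u, hu, rfl⟩ := hb
      exact ⟨_, ⟨k, rfl⟩, _, ih u hu, (update_add _ _ _).symm⟩

lemma mem_sumPow_exists {s : ℕ} (a : Fin s → (Fin r →₀ ℕ)) (i : Fin r) (n : ℕ)
    (b : Fin r →₀ ℕ) (hb : b ∈ sumPow (Set.range fun k => Finsupp.update (a k) i 0) n) :
    ∃ M : ℕ, b + Finsupp.single i M ∈ sumPow (Set.range a) n := by
  induction n generalizing b with
  | zero =>
      simp only [sumPow, Set.mem_singleton_iff] at hb ⊢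
      exact ⟨0, by simp [hb]⟩
  | succ n ih =>
      obtain ⟨t, ⟨k, rfl⟩, u, hu, rfl⟩ := hb
      obtain ⟨M, hM⟩ := ih u hu
      refine ⟨a k i + M, ?_⟩
      have : Finsupp.update (a k) i 0 + u + Finsupp.single i (a k i + M)
          = a k + (u + Finsupp.single i M) := by
        ext j
        by_cases h : j = i
        · subst h
          simp [update_apply0, Finsupp.single_apply]
          try omega
        · simp [update_apply0, Finsupp.single_apply, h, (Ne.symm h : ¬ i = j)]
      rw [this]
      exact ⟨a k, ⟨k, rfl⟩, _, hM, rfl⟩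

end Stmt3Aux

open Stmt3Aux in
/-- For a monomial ideal `I` of `K[t_1,…,t_r]` and each variable `t_i`,
`I^n : t_i^∞ = I[i]^n`, where `I[i]` is the ideal obtained from `I` by setting `t_i = 1`. -/
theorem stmt_3 {K : Type*} [Field K] {r s : ℕ}
    (a : Fin s → (Fin r →₀ ℕ)) (n : ℕ) (hn : 1 ≤ n) (i : Fin r) :
    (⨆ m : ℕ,
        Submodule.colon
          ((Ideal.span (Set.range fun k => monomial (a k) (1 : K))) ^ n)
          (Ideal.span {(X i : MvPolynomial (Fin r) K) ^ m})) =
      (Ideal.span (Set.range fun k => monomial (Finsupp.update (a k) i 0) (1 : K))) ^ n := by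
  have hrangeS : (Set.range fun k => monomial (a k) (1 : K))
      = (fun c => monomial c (1 : K)) '' Set.range a := by
    rw [← Set.range_comp]; rfl
  have hrangeT : (Set.range fun k => monomial (Finsupp.update (a k) i 0) (1 : K))
      = (fun c => monomial c (1 : K)) '' Set.range fun k => Finsupp.update (a k) i 0 := by
    rw [← Set.range_comp]; rfl
  rw [hrangeS, hrangeT, span_pow, span_pow]
  apply le_antisymm
  · -- each colon ideal is contained in J^n
    refine iSup_le fun m => fun f hf => ?_
    rw [Ideal.mem_colon_span_singleton, X_pow_eq_monomial] at hf
    rw [mem_ideal_span_monomial_image] at hf ⊢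
    intro c hc
    have hcc : c + Finsupp.single i m ∈ (f * monomial (Finsupp.single i m) (1 : K)).support := by
      rw [MvPolynomial.mem_support_iff] at hc ⊢
      rwa [MvPolynomial.coeff_mul_monomial, mul_one]
    obtain ⟨b, hb, hble⟩ := hf _ hcc
    refine ⟨Finsupp.update b i 0, mem_sumPow_update a i n b hb, ?_⟩
    intro j
    by_cases h : j = i
    · subst h; simp [update_apply0]
    · have := hble j
      simpa [update_apply0, Finsupp.single_apply, h, (Ne.symm h : ¬ i = j)] using this
  · -- J^n ≤ the sup
    rw [Ideal.span_le]
    rintro x ⟨b, hb, rfl⟩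
    obtain ⟨M, hM⟩ := mem_sumPow_exists a i n b hb
    have hmem : (monomial b (1 : K)) * X i ^ M ∈
        Ideal.span ((fun c => monomial c (1 : K)) '' sumPow (Set.range a) n) := by
      rw [X_pow_eq_monomial, monomial_mul, mul_one]
      exact Ideal.subset_span ⟨b + Finsupp.single i M, hM, rfl⟩
    have : (monomial b (1 : K)) ∈
        Submodule.colon
          (Ideal.span ((fun c => monomial c (1 : K)) '' sumPow (Set.range a) n))
          (Ideal.span {(X i : MvPolynomial (Fin r) K) ^ M}) := by
      rw [Ideal.mem_colon_span_singleton]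
      exact hmem
    exact le_iSup (fun m => Submodule.colon
      (Ideal.span ((fun c => monomial c (1 : K)) '' sumPow (Set.range a) n))
      (Ideal.span {(X i : MvPolynomial (Fin r) K) ^ m})) M this
end

section
/- Let I be an ideal of a commutative Noetherian ring R generated by elements f_1,...,f_s. Then for every n > 0, the Ratliff–Rush closure of I^n equals ∪_{m≥0} ( I^{n+m} : (f_1^m,...,f_s^m) ), i.e., an element x lies in some I^{n+m} : I^m if and only if x · f_i^m ∈ I^{n+m} for some m ≥ 0 and all i. -/
/-!
Since `(f_1^m, …, f_s^m) ⊆ I^m`, every `I^{n+m} : I^m` lies in `I^{n+m} : (f_1^m, …, f_s^m)`.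
Conversely, by pigeonhole every product of `m + k` generators with `s·m < m + k` contains
some `f_i` at least `m` times, so `I^{m+k} ⊆ (f_1^m, …, f_s^m) · I^k`; multiplying
`x · (f_1^m, …, f_s^m) ⊆ I^{n+m}` by `I^k` then gives `x · I^{m+k} ⊆ I^{n+m+k}`.
-/

open Finset

namespace Ideal

variable {R : Type*} [CommSemiring R]

theorem colon_le_colon_mul_mul (K J L : Ideal R) :
    K.colon (J : Set R) ≤ (K * L).colon ((J * L : Ideal R) : Set R) := by
  intro x hx
  rw [Submodule.mem_colon] at hx ⊢
  intro y hy
  refine Submodule.mul_induction_on hy (fun a ha b hb => ?_) fun y z hy hz => ?_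
  · rw [smul_eq_mul, ← mul_assoc]
    exact mul_mem_mul (hx a ha) hb
  · rw [smul_add]
    exact add_mem hy hz

theorem span_range_pow_le_pow {ι : Type*} (f : ι → R) (m : ℕ) :
    span (Set.range fun i => f i ^ m) ≤ span (Set.range f) ^ m :=
  span_le.2 <| Set.range_subset_iff.2 fun i => pow_mem_pow (subset_span (Set.mem_range_self i)) m

variable {ι : Type*} [Fintype ι]

theorem prod_comp_mem_span_pow_mul_pow (f : ι → R) {m k : ℕ}
    (h : Fintype.card ι * m < m + k) (g : Fin (m + k) → ι) :
    ∏ j, f (g j) ∈ span (Set.range fun i => f i ^ m) * span (Set.range f) ^ k := by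
  classical
  obtain ⟨i, hi⟩ := Fintype.exists_lt_card_fiber_of_mul_lt_card g (by simpa using h)
  obtain ⟨T, hT, hTcard⟩ := exists_subset_card_eq hi.le
  rw [← prod_mul_prod_compl T]
  refine mul_mem_mul ?_ ?_
  · have hfi : ∏ j ∈ T, f (g j) = f i ^ m := by
      rw [prod_congr rfl fun j hj => by rw [(mem_filter.1 (hT hj)).2], prod_const, hTcard]
    exact hfi ▸ subset_span ⟨i, rfl⟩
  · have hcard : #Tᶜ = k := by rw [card_compl, hTcard, Fintype.card_fin]; omega
    have hmem := prod_mem_prod (s := Tᶜ) (I := fun _ => span (Set.range f))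
      fun j _ => subset_span (Set.mem_range_self (g j))
    rwa [prod_const, hcard] at hmem

theorem span_pow_le_span_pow_mul_pow (f : ι → R) {m k : ℕ}
    (h : Fintype.card ι * m < m + k) :
    span (Set.range f) ^ (m + k) ≤ span (Set.range fun i => f i ^ m) * span (Set.range f) ^ k := by
  rw [span, Submodule.span_pow, Submodule.span_le]
  intro a ha
  obtain ⟨g, rfl⟩ := Set.mem_pow.1 ha
  choose g' hg' using fun j => (g j).2
  rw [List.prod_ofFn, ← funext hg']
  exact prod_comp_mem_span_pow_mul_pow f h g'

end Ideal

theorem stmt_4_general {R : Type*} [CommRing R] {s : ℕ} (f : Fin s → R)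
    (n : ℕ) :
    (⨆ m : ℕ,
        Submodule.colon ((Ideal.span (Set.range f)) ^ (n + (m + 1)))
          (((Ideal.span (Set.range f)) ^ (m + 1) : Ideal R) : Set R)) =
      ⨆ m : ℕ,
        Submodule.colon ((Ideal.span (Set.range f)) ^ (n + m))
          (Ideal.span (Set.range fun i => f i ^ m)) := by
  set I := Ideal.span (Set.range f)
  apply le_antisymm
  · exact iSup_le fun m => le_iSup_of_le (m + 1) <|
      Submodule.colon_mono le_rfl (Ideal.span_range_pow_le_pow f (m + 1))
  · refine iSup_le fun m => le_iSup_of_le (m + s * m) ?_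
    calc _ ≤ (I ^ (n + m) * I ^ (s * m + 1)).colon
          ((Ideal.span (Set.range fun i => f i ^ m) * I ^ (s * m + 1) : Ideal R) : Set R) :=
          Ideal.colon_le_colon_mul_mul _ _ _
      _ ≤ _ := by
        refine Submodule.colon_mono (by rw [← pow_add, add_assoc, add_assoc]) ?_
        rw [add_assoc]
        exact Ideal.span_pow_le_span_pow_mul_pow f (by rw [Fintype.card_fin]; omega)

/-- For an ideal `I = (f_1,…,f_s)` of a commutative Noetherian ring and `n > 0`,
the Ratliff–Rush closure `∪_{m≥1} (I^{n+m} : I^m)` equals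
`∪_{m≥0} (I^{n+m} : (f_1^m,…,f_s^m))`. -/
theorem stmt_4 {R : Type*} [CommRing R] [IsNoetherianRing R] {s : ℕ} (f : Fin s → R)
    (n : ℕ) (hn : 0 < n) :
    (⨆ m : ℕ,
        Submodule.colon ((Ideal.span (Set.range f)) ^ (n + (m + 1)))
          (((Ideal.span (Set.range f)) ^ (m + 1) : Ideal R) : Set R)) =
      ⨆ m : ℕ,
        Submodule.colon ((Ideal.span (Set.range f)) ^ (n + m))
          (Ideal.span (Set.range fun i => f i ^ m)) :=
  stmt_4_general f n
end

section
/- Let I be an ideal of a commutative ring R generated by f_1,...,f_s, and suppose x ∈ R satisfies x·f_i^m ∈ I^{n+m} for all i = 1,...,s and some fixed m ≥ 0. Then x ∈ I^{n+sm} : I^{sm}. -/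
/-!
Allow a different exponent `c i` for each generator: if `x * f i ^ c i ∈ I ^ (n + c i)` for all `i`,
then `x ∈ I ^ (n + ∑ c) : I ^ (∑ c)`. This version is proved by induction on `∑ c`. Since
`I ^ (k + 1) = I * I ^ k`, it suffices to treat `x * f j` for each generator, and the hypothesis
for `x * f j` (with `n + 1`, and `c j` lowered by one) follows from the one for `x`. The induction
stops once some `c j = 0`, because then the hypothesis says `x ∈ I ^ n`; this is the pigeonhole
step of the usual proof with monomials.
-/

open Submodule

namespace Ideal

variable {R : Type*} [CommRing R]

theorem mem_colon_pow_of_mem_pow {I : Ideal R} {x : R} {n : ℕ} (hx : x ∈ I ^ n) (k : ℕ) :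
    x ∈ (I ^ (n + k)).colon ((I ^ k : Ideal R) : Set R) :=
  mem_colon.mpr fun _ hy => pow_add I n k ▸ mul_mem_mul hx hy

theorem mem_colon_span_mul_of_forall_mul_mem {N K : Ideal R} {S : Set R} {x : R}
    (h : ∀ a ∈ S, x * a ∈ N.colon (K : Set R)) :
    x ∈ N.colon ((span S * K : Ideal R) : Set R) := by
  rw [← span_eq K, span_mul_span, colon_span, mem_colon]
  rintro _ ⟨a, ha, b, hb, rfl⟩
  simpa only [smul_eq_mul, mul_assoc] using mem_colon.mp (h a ha) b hb

theorem mul_mul_pow_update_mem {ι : Type*} [DecidableEq ι] {I : Ideal R} {f : ι → R}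
    {c : ι → ℕ} {n : ℕ} {x : R} (h : ∀ i, x * f i ^ c i ∈ I ^ (n + c i)) {j : ι}
    (hfj : f j ∈ I) (hcj : c j ≠ 0) (i : ι) :
    x * f j * f i ^ Function.update c j (c j - 1) i ∈
      I ^ (n + 1 + Function.update c j (c j - 1) i) := by
  rcases eq_or_ne i j with rfl | hij
  · rw [Function.update_self, mul_assoc, ← pow_succ', Nat.sub_add_cancel (by omega),
      show n + 1 + (c i - 1) = n + c i by omega]
    exact h i
  · rw [Function.update_of_ne hij, mul_right_comm, add_right_comm, pow_succ]
    exact mul_mem_mul (h i) hfj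

theorem mem_colon_pow_sum_of_forall_mul_pow_mem {ι : Type*} [Fintype ι] [Nonempty ι]
    (f : ι → R) (c : ι → ℕ) (n : ℕ) (x : R)
    (h : ∀ i, x * f i ^ c i ∈ span (Set.range f) ^ (n + c i)) :
    x ∈ (span (Set.range f) ^ (n + ∑ i, c i)).colon
      ((span (Set.range f) ^ (∑ i, c i) : Ideal R) : Set R) := by
  classical
  obtain ⟨k, hk⟩ : ∃ k, ∑ i, c i = k := ⟨_, rfl⟩
  rw [hk]
  induction k generalizing x n c with
  | zero =>
    obtain ⟨j⟩ := ‹Nonempty ι›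
    have hcj : c j = 0 := Finset.sum_eq_zero_iff.mp hk j (Finset.mem_univ j)
    exact mem_colon_pow_of_mem_pow (by simpa [hcj] using h j) 0
  | succ k ih =>
    by_cases hc : ∃ j, c j = 0
    · obtain ⟨j, hcj⟩ := hc
      exact mem_colon_pow_of_mem_pow (by simpa [hcj] using h j) _
    push Not at hc
    rw [pow_succ', ← add_assoc]
    apply mem_colon_span_mul_of_forall_mul_mem
    rintro _ ⟨j, rfl⟩
    have hsum : ∑ i, Function.update c j (c j - 1) i = k := by
      rw [Finset.sum_update_of_mem (Finset.mem_univ j)]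
      rw [Finset.sum_eq_add_sum_sdiff_singleton_of_mem (Finset.mem_univ j)] at hk
      have := hc j
      omega
    rw [add_right_comm]
    exact ih _ (n + 1) _ (mul_mul_pow_update_mem h mem_span_range_self (hc j)) hsum

end Ideal

/-- If `I = (f_1,…,f_s)` and `x·f_i^m ∈ I^{n+m}` for all `i`, then
`x ∈ I^{n+sm} : I^{sm}`. -/
theorem stmt_5 {R : Type*} [CommRing R] {s : ℕ} (hs : 1 ≤ s) (f : Fin s → R)
    (n m : ℕ) (x : R)
    (h : ∀ i, x * f i ^ m ∈ (Ideal.span (Set.range f)) ^ (n + m)) :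
    x ∈ Submodule.colon ((Ideal.span (Set.range f)) ^ (n + s * m))
      (((Ideal.span (Set.range f)) ^ (s * m) : Ideal R) : Set R) := by
  have : Nonempty (Fin s) := ⟨⟨0, hs⟩⟩
  simpa using Ideal.mem_colon_pow_sum_of_forall_mul_pow_mem f (fun _ => m) n x h
end

section
/- Let I be a monomial ideal of K[t_1,...,t_r] generated by powers of distinct variables, I = (t_{i_1}^{a_1},...,t_{i_p}^{a_p}) with i_1 < ... < i_p and a_k ≥ 1. Then for all n ≥ 1, the set of associated primes of I^n/I^{n+1} is exactly { (t_{i_1},...,t_{i_p}) }. -/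
open MvPolynomial

open scoped Pointwise

/-! Every power of `I` is a monomial ideal generated by monomials in the variables `t_{i_k}`
alone, and modulo such an ideal every polynomial outside `P = (t_{i_1}, …, t_{i_p})` is a
nonzerodivisor: for a term order that compares the `P`-variables first, the product of the
minimal term of `g` with the minimal term of `f` not in the ideal survives in `f g` and is not
in the ideal either. Hence `I^(n+1)` is primary with radical `P`, so `Ass(R/I^(n+1)) = {P}`;
finally `I^n/I^(n+1)` embeds into `R/I^(n+1)` and is nonzero by Krull's intersection theorem. -/

namespace Finsupp

variable {σ : Type*}

theorem le_of_le_add_of_mem_supported {S : Set σ} {t d e : σ →₀ ℕ}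
    (ht : t ∈ supported ℕ ℕ S) (he : ∀ j ∈ S, e j = 0) (h : t ≤ d + e) : t ≤ d := by
  intro j
  by_cases hj : j ∈ S
  · simpa [he j hj] using h j
  · simp [notMem_support_iff.mp fun hjt => hj ((mem_supported ℕ t).mp ht hjt)]

end Finsupp

theorem Ideal.pow_succ_lt_pow_of_isDomain {R : Type*} [CommRing R] [IsNoetherianRing R]
    [IsDomain R] {I : Ideal R} (h0 : I ≠ ⊥) (h1 : I ≠ ⊤) (n : ℕ) : I ^ (n + 1) < I ^ n := by
  refine (Ideal.pow_le_pow_right n.le_succ).lt_of_ne fun h => pow_ne_zero n h0 ?_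
  have hstable : ∀ k ≥ n, I ^ n ≤ I ^ k := Nat.le_induction le_rfl fun k _ ih =>
    h.symm.le.trans (by rw [pow_succ, pow_succ]; exact Ideal.mul_mono_left ih)
  have hle (k : ℕ) : I ^ n ≤ I ^ k := (le_total k n).elim Ideal.pow_le_pow_right (hstable k)
  exact eq_bot_iff.2 ((le_iInf hle).trans (Ideal.iInf_pow_eq_bot_of_isDomain I h1).le)

theorem associatedPrimes.eq_singleton_of_isPrimary_of_not_le {R : Type*} [CommRing R]
    [IsNoetherianRing R] {M N : Ideal R} (hN : N.IsPrimary) (hMN : ¬M ≤ N) :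
    associatedPrimes R (M ⧸ Submodule.comap M.subtype N) = {N.radical} := by
  have hker : Submodule.comap M.subtype N = LinearMap.ker (N.mkQ ∘ₗ M.subtype) := by
    rw [LinearMap.ker_comp, Submodule.ker_mkQ]
  have hinj : Function.Injective (Submodule.liftQ _ _ hker.le) :=
    LinearMap.ker_eq_bot.1 (Submodule.ker_liftQ_eq_bot' _ _ hker)
  have : Nontrivial (M ⧸ Submodule.comap M.subtype N) := by
    obtain ⟨x, hxM, hxN⟩ := SetLike.not_le_iff_exists.1 hMN
    refine Submodule.Quotient.nontrivial_iff.2 fun h => hxN ?_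
    exact Submodule.mem_comap.1 (h ▸ Submodule.mem_top : (⟨x, hxM⟩ : M) ∈ _)
  refine ((associatedPrimes.nonempty R _).subset_singleton_iff).1 ?_
  exact associatedPrimes.eq_singleton_of_isPrimary hN ▸ associatedPrimes.subset_of_injective hinj

namespace MvPolynomial

variable {σ R : Type*} [CommSemiring R]

theorem span_monomial_pow (T : Set (σ →₀ ℕ)) (n : ℕ) :
    Ideal.span ((fun t => monomial t (1 : R)) '' T) ^ n
      = Ideal.span ((fun t => monomial t (1 : R)) '' (n • T)) := by
  induction n with
  | zero => rw [pow_zero, zero_nsmul, Ideal.one_eq_top]; simp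
  | succ n ih =>
    rw [pow_succ, ih, Ideal.span_mul_span', succ_nsmul, ← Set.image2_add, ← Set.image2_mul]
    exact congrArg _ (Set.image_image2_distrib fun a b => by simp [monomial_mul]).symm

theorem span_X_pow_eq_span_monomial {ι : Type*} (v : ι → σ) (a : ι → ℕ) :
    Ideal.span (Set.range fun k => (X (v k) : MvPolynomial σ R) ^ a k)
      = Ideal.span
          ((fun t => monomial t (1 : R)) '' Set.range fun k => Finsupp.single (v k) (a k)) := by
  rw [← Set.range_comp]
  simp_rw [Function.comp_def, X_pow_eq_monomial]

theorem mem_span_monomial_of_mul_mem_of_notMem [NoZeroDivisors R] {S : Set σ}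
    {T : Set (σ →₀ ℕ)}
    (hT : T ⊆ Finsupp.supported ℕ ℕ S) {f g : MvPolynomial σ R}
    (hfg : f * g ∈ Ideal.span ((fun t => monomial t (1 : R)) '' T))
    (hg : g ∉ Ideal.span (X '' S)) :
    f ∈ Ideal.span ((fun t => monomial t (1 : R)) '' T) := by
  classical
  let _ : LinearOrder σ := linearOrderOfSTO WellOrderingRel
  -- Comparing the `S`-parts first makes the minimal term of `g` free of the variables in `S`.
  let key (d : σ →₀ ℕ) : Lex (Lex (σ →₀ ℕ) × Lex (σ →₀ ℕ)) :=
    toLex (toLex (d.filter (· ∈ S)), toLex d)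
  have key_add (d e : σ →₀ ℕ) : key (d + e) = key d + key e := by
    simp only [key, Finsupp.filter_add]; rfl
  have key_injective : Function.Injective key := fun d e h =>
    toLex.injective (congrArg (fun x => (ofLex x).2) h)
  rw [mem_ideal_span_monomial_image] at hfg ⊢
  rw [mem_ideal_span_X_image] at hg
  push Not at hg
  obtain ⟨e, he, heS⟩ := hg
  by_contra! hf
  obtain ⟨d₀, hd₀, hd₀min⟩ := (f.support.filter fun d => ∀ t ∈ T, ¬t ≤ d).exists_min_image key
    (by obtain ⟨d, hd, hdT⟩ := hf; exact ⟨d, Finset.mem_filter.2 ⟨hd, hdT⟩⟩)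
  obtain ⟨hd₀f, hd₀T⟩ := Finset.mem_filter.1 hd₀
  obtain ⟨e₀, he₀, he₀min⟩ := g.support.exists_min_image key ⟨e, he⟩
  have he₀S : ∀ j ∈ S, e₀ j = 0 := by
    have hfilter : toLex (e₀.filter (· ∈ S)) ≤ toLex (e.filter (· ∈ S)) := by
      rcases Prod.Lex.le_iff.1 (he₀min e he) with h | h
      · exact h.le
      · exact h.1.le
    rw [(Finsupp.filter_eq_zero_iff _ _).2 heS] at hfilter
    exact (Finsupp.filter_eq_zero_iff _ _).1 (toLex.injective (le_bot_iff.1 hfilter))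
  have hunique : UniqueAdd f.support g.support d₀ e₀ := by
    intro u v hu hv huv
    have hu' : u ∈ f.support.filter fun d => ∀ t ∈ T, ¬t ≤ d :=
      Finset.mem_filter.2 ⟨hu, fun t ht htu => hd₀T t ht
        (Finsupp.le_of_le_add_of_mem_supported (hT ht) he₀S (huv ▸ le_self_add.trans' htu))⟩
    have := (add_eq_add_iff_eq_and_eq (hd₀min u hu') (he₀min v hv)).1
      (by rw [← key_add, ← key_add, huv])
    exact ⟨key_injective this.1.symm, key_injective this.2.symm⟩
  have hcoeff : coeff (d₀ + e₀) (f * g) ≠ 0 :=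
    (AddMonoidAlgebra.coeff_mul_add_of_uniqueAdd hunique).trans_ne
      (mul_ne_zero (mem_support_iff.1 hd₀f) (mem_support_iff.1 he₀))
  obtain ⟨t, ht, htle⟩ := hfg _ (mem_support_iff.2 hcoeff)
  exact hd₀T t ht (Finsupp.le_of_le_add_of_mem_supported (hT ht) he₀S htle)

theorem isPrime_span_X_image [NoZeroDivisors R] [Nontrivial R] (S : Set σ) :
    (Ideal.span (X '' S : Set (MvPolynomial σ R))).IsPrime := by
  refine Ideal.isPrime_iff.2 ⟨fun h => ?_, fun {f g} hfg => or_iff_not_imp_right.2 fun hg => ?_⟩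
  · obtain ⟨j, -, hj⟩ :=
      mem_ideal_span_X_image.1 (h ▸ Submodule.mem_top : (1 : MvPolynomial σ R) ∈ _) 0 (by simp)
    exact hj rfl
  · have hX : Ideal.span (X '' S : Set (MvPolynomial σ R))
        = Ideal.span ((fun t => monomial t (1 : R)) '' ((Finsupp.single · 1) '' S)) := by
      rw [Set.image_image]; rfl
    rw [hX] at hfg ⊢
    exact mem_span_monomial_of_mul_mem_of_notMem
      (Set.image_subset_iff.2 fun j hj => Finsupp.single_mem_supported ℕ 1 hj) hfg (hX ▸ hg)

variable [NoZeroDivisors R] [Nontrivial R] {ι : Type*} {v : ι → σ} {a : ι → ℕ}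

theorem isPrime_span_range_X (v : ι → σ) :
    (Ideal.span (Set.range fun k => (X (v k) : MvPolynomial σ R))).IsPrime := by
  rw [show (Set.range fun k => (X (v k) : MvPolynomial σ R)) = X '' Set.range v from
    Set.range_comp X v]
  exact isPrime_span_X_image _

theorem radical_span_X_pow (ha : ∀ k, 1 ≤ a k) :
    (Ideal.span (Set.range fun k => (X (v k) : MvPolynomial σ R) ^ a k)).radical
      = Ideal.span (Set.range fun k => (X (v k) : MvPolynomial σ R)) := by
  refine le_antisymm ((isPrime_span_range_X v).radical_le_iff.2 (Ideal.span_le.2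
    (Set.range_subset_iff.2 fun k => ?_))) (Ideal.span_le.2 (Set.range_subset_iff.2 fun k =>
      Ideal.mem_radical_iff.2 ⟨a k, Ideal.subset_span ⟨k, rfl⟩⟩))
  exact Ideal.pow_mem_of_mem _ (Ideal.subset_span (Set.mem_range_self k)) _ (ha k)

theorem span_X_pow_ne_top (ha : ∀ k, 1 ≤ a k) :
    Ideal.span (Set.range fun k => (X (v k) : MvPolynomial σ R) ^ a k) ≠ ⊤ := fun h =>
  (isPrime_span_range_X (R := R) v).ne_top (by rw [← radical_span_X_pow ha, h, Ideal.radical_top])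

theorem span_X_pow_ne_bot [Nonempty ι] :
    Ideal.span (Set.range fun k => (X (v k) : MvPolynomial σ R) ^ a k) ≠ ⊥ := by
  obtain ⟨k⟩ := ‹Nonempty ι›
  refine fun h => pow_ne_zero (a k) (X_ne_zero (R := R) (v k)) ?_
  rw [← Ideal.mem_bot, ← h]
  exact Ideal.subset_span ⟨k, rfl⟩

theorem isPrimary_span_X_pow_pow (ha : ∀ k, 1 ≤ a k) {m : ℕ} (hm : m ≠ 0) :
    (Ideal.span (Set.range fun k => (X (v k) : MvPolynomial σ R) ^ a k) ^ m).IsPrimary := by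
  refine Ideal.isPrimary_iff.2 ⟨fun h => span_X_pow_ne_top ha
    ((Ideal.pow_eq_top_iff.1 h).resolve_right hm), fun hxy => or_iff_not_imp_right.2 fun hy => ?_⟩
  rw [Ideal.radical_pow _ hm, radical_span_X_pow ha,
    show (Set.range fun k => (X (v k) : MvPolynomial σ R)) = X '' Set.range v from
      Set.range_comp X v] at hy
  rw [span_X_pow_eq_span_monomial, span_monomial_pow] at hxy ⊢
  refine mem_span_monomial_of_mul_mem_of_notMem ?_ hxy hy
  refine AddSubmonoid.nsmul_subset (S := (Finsupp.supported ℕ ℕ _).toAddSubmonoid) ?_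
  exact Set.range_subset_iff.2 fun k => Finsupp.single_mem_supported ℕ _ ⟨k, rfl⟩

end MvPolynomial

theorem stmt_11_general {K : Type*} [Field K] {r p : ℕ} (hp : 1 ≤ p)
    (i : Fin p → Fin r) (a : Fin p → ℕ) (ha : ∀ k, 1 ≤ a k)
    (n : ℕ) :
    associatedPrimes (MvPolynomial (Fin r) K)
        ((↥((Ideal.span (Set.range fun k => (X (i k) : MvPolynomial (Fin r) K) ^ a k)) ^ n)) ⧸
          (Submodule.comap
            ((Ideal.span (Set.range fun k => (X (i k) : MvPolynomial (Fin r) K) ^ a k)) ^ n).subtype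
            ((Ideal.span (Set.range fun k => (X (i k) : MvPolynomial (Fin r) K) ^ a k)) ^ (n + 1)))) =
      {Ideal.span (Set.range fun k => (X (i k) : MvPolynomial (Fin r) K))} := by
  have : Nonempty (Fin p) := ⟨⟨0, hp⟩⟩
  rw [← radical_span_X_pow (v := i) ha, ← Ideal.radical_pow _ n.succ_ne_zero]
  exact associatedPrimes.eq_singleton_of_isPrimary_of_not_le
    (isPrimary_span_X_pow_pow ha n.succ_ne_zero)
    (Ideal.pow_succ_lt_pow_of_isDomain span_X_pow_ne_bot (span_X_pow_ne_top ha) n).not_ge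

/-- If `I = (t_{i_1}^{a_1},…,t_{i_p}^{a_p})` is generated by powers of `p`
distinct variables (`i` strictly increasing, `a_k ≥ 1`, `p ≥ 1`), then for all
`n ≥ 1`, `Ass(I^n/I^{n+1}) = {(t_{i_1},…,t_{i_p})}`. -/
theorem stmt_11 {K : Type*} [Field K] {r p : ℕ} (hp : 1 ≤ p)
    (i : Fin p → Fin r) (hi : StrictMono i) (a : Fin p → ℕ) (ha : ∀ k, 1 ≤ a k)
    (n : ℕ) (hn : 1 ≤ n) :
    associatedPrimes (MvPolynomial (Fin r) K)
        ((↥((Ideal.span (Set.range fun k => (X (i k) : MvPolynomial (Fin r) K) ^ a k)) ^ n)) ⧸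
          (Submodule.comap
            ((Ideal.span (Set.range fun k => (X (i k) : MvPolynomial (Fin r) K) ^ a k)) ^ n).subtype
            ((Ideal.span (Set.range fun k => (X (i k) : MvPolynomial (Fin r) K) ^ a k)) ^ (n + 1)))) =
      {Ideal.span (Set.range fun k => (X (i k) : MvPolynomial (Fin r) K))} :=
  stmt_11_general hp i a ha n
end

section
/- Let I be a monomial ideal with maximal generator degree d in K[x,y,z], for d ≥ 4: I = (x^d, x^{d-1}y, xy^{d-1}, y^d, x^2 y^{d-2} z). Then for n ≥ d-2, I^n : (x,y,z)^∞ = I^n, i.e., I^n is saturated with respect to the maximal ideal (x,y,z). -/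
/-!
Since `z` lies in `(x, y, z)`, it suffices to show that `z` is a nonzerodivisor modulo `I^n`.
For a monomial ideal this holds as soon as deleting `z` from any generator of `I^n` gives a
multiple of a generator. Every generator of `I` has `(x, y)`-degree `d`, so a generator of `I^n`
is `x^a y^b z^c` with `a + b = n d`; and for `n ≥ d - 2` every `x^a y^b` with `a + b = n d` is
itself a product of `n` of the `z`-free generators, because every `a ≤ n d` is a sum of `n` parts
from `{0, 1, d - 1, d}`.
-/

open MvPolynomial
open scoped Pointwise

theorem Set.add_nsmul_mem_nsmul {M : Type*} [AddMonoid M] {S : Set M} {x y : M} {i j : ℕ}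
    (hx : x ∈ i • S) (hy : y ∈ j • S) : x + y ∈ (i + j) • S :=
  add_nsmul S i j ▸ Set.add_mem_add hx hy

theorem Ideal.iSup_colon_pow_eq_self {R : Type*} [CommSemiring R] {I J : Ideal R} {a : R}
    (ha : a ∈ J) (h : ∀ f, a * f ∈ I → f ∈ I) :
    ⨆ k : ℕ, I.colon ((J ^ k : Ideal R) : Set R) = I := by
  have h_pow : ∀ k f, a ^ k * f ∈ I → f ∈ I := by
    intro k
    induction k with
    | zero => simp
    | succ k ih => exact fun f hf => h f (ih _ (by rwa [← mul_assoc, ← pow_succ]))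
  refine le_antisymm (iSup_le fun k f hf => h_pow k f ?_) (le_iSup_of_le 0 Ideal.le_colon)
  rw [mul_comm]
  exact Submodule.mem_colon.mp hf _ (Ideal.pow_mem_pow ha k)

namespace MvPolynomial

variable {σ R : Type*} [CommSemiring R]

theorem mem_of_X_mul_mem_span_monomial_image {S : Set (σ →₀ ℕ)} {i : σ}
    (hS : ∀ s ∈ S, ∃ t ∈ S, t ≤ s.erase i) {f : MvPolynomial σ R}
    (hf : X i * f ∈ Ideal.span ((fun s => monomial s (1 : R)) '' S)) :
    f ∈ Ideal.span ((fun s => monomial s (1 : R)) '' S) := by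
  rw [mem_ideal_span_monomial_image] at hf ⊢
  intro m hm
  obtain ⟨s, hs, hsm⟩ := hf (Finsupp.single i 1 + m) (by
    rw [support_X_mul]; exact Finset.mem_map_of_mem _ hm)
  obtain ⟨t, ht, hts⟩ := hS s hs
  refine ⟨t, ht, hts.trans fun j => ?_⟩
  by_cases hj : j = i
  · simp [hj]
  · simpa [Finsupp.erase_ne hj, Finsupp.single_apply, Ne.symm hj] using hsm j

theorem monomial_image_nsmul (S : Set (σ →₀ ℕ)) (n : ℕ) :
    (fun s => monomial s (1 : R)) '' (n • S) = ((fun s => monomial s (1 : R)) '' S) ^ n := by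
  induction n with
  | zero => simp [Set.singleton_one]
  | succ n ih =>
    rw [succ_nsmul, pow_succ, ← ih, ← Set.image2_add, ← Set.image2_mul]
    exact Set.image_image2_distrib fun a b => by rw [monomial_mul, one_mul]

theorem span_monomial_image_pow (S : Set (σ →₀ ℕ)) (n : ℕ) :
    Ideal.span ((fun s => monomial s (1 : R)) '' S) ^ n =
      Ideal.span ((fun s => monomial s (1 : R)) '' (n • S)) := by
  rw [monomial_image_nsmul]
  exact Submodule.span_pow _ n

end MvPolynomial

namespace SaturatedPowers

-- the `(x, y)`-exponents of the `z`-free generators `x^d, x^{d-1}y, xy^{d-1}, y^d`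
def zFreeExponents (d : ℕ) : Set (ℕ × ℕ) := {(d, 0), (d - 1, 1), (1, d - 1), (0, d)}

theorem mk_mem_nsmul_zFreeExponents {d n a b : ℕ} (hd : 0 < d) (hn : d - 2 ≤ n)
    (hab : a + b = n * d) : (a, b) ∈ n • zFreeExponents d := by
  have h_three : ∀ {i j k : ℕ} {x y z : ℕ × ℕ}, x ∈ zFreeExponents d → y ∈ zFreeExponents d →
      z ∈ zFreeExponents d → i • x + j • y + k • z ∈ (i + j + k) • zFreeExponents d :=
    fun hx hy hz => Set.add_nsmul_mem_nsmul (Set.add_nsmul_mem_nsmul (Set.nsmul_mem_nsmul hx)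
      (Set.nsmul_mem_nsmul hy)) (Set.nsmul_mem_nsmul hz)
  obtain ⟨q, r, hr, rfl⟩ : ∃ q r, r < d ∧ a = q * d + r :=
    ⟨a / d, a % d, Nat.mod_lt _ hd, by rw [mul_comm, Nat.div_add_mod]⟩
  by_cases h : q + r ≤ n
  · -- `a = q·d + r·1`, padded with parts `0`
    obtain ⟨m, rfl⟩ : ∃ m, n = q + r + m := ⟨n - q - r, by omega⟩
    convert h_three (i := q) (j := r) (k := m) (x := (d, 0)) (y := (1, d - 1)) (z := (0, d))
      (by simp [zFreeExponents]) (by simp [zFreeExponents]) (by simp [zFreeExponents]) using 1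
    obtain ⟨e, rfl⟩ : ∃ e, d = e + 1 := ⟨d - 1, by omega⟩
    ext <;> simp
    nlinarith
  · -- `a = (q + r + 1 - d)·d + (d - r)·(d - 1)`, padded with parts `0`; here `q + r + 1 ≥ d`
    have hq : q + 1 ≤ n := by
      by_contra!
      have : q * d ≤ n * d := by omega
      nlinarith
    obtain ⟨k, rfl⟩ : ∃ k, n = q + 1 + k := ⟨n - q - 1, by omega⟩
    obtain ⟨j, rfl⟩ : ∃ j, d = r + j := ⟨d - r, by omega⟩
    obtain ⟨i, hi⟩ : ∃ i, q + 1 = i + j := ⟨q + r + 1 - (r + j), by omega⟩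
    convert h_three (i := i) (j := j) (k := k) (x := (r + j, 0)) (y := (r + j - 1, 1))
      (z := (0, r + j)) (by simp [zFreeExponents]) (by simp [zFreeExponents])
      (by simp [zFreeExponents]) using 1
    · rw [← hi]
    obtain ⟨e, he⟩ : ∃ e, r + j = e + 1 := ⟨r + j - 1, by omega⟩
    ext <;> simp [he]
    all_goals nlinarith

noncomputable def xyExponent : ℕ × ℕ →+ (Fin 3 →₀ ℕ) :=
  (Finsupp.singleAddHom 0).comp (AddMonoidHom.fst ℕ ℕ) +
    (Finsupp.singleAddHom 1).comp (AddMonoidHom.snd ℕ ℕ)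

theorem monomial_xyExponent {R : Type*} [CommSemiring R] (a b : ℕ) :
    monomial (xyExponent (a, b)) (1 : R) = X 0 ^ a * X 1 ^ b := by
  simp [xyExponent, X_pow_eq_monomial, monomial_mul]

theorem erase_two_eq_xyExponent (s : Fin 3 →₀ ℕ) : s.erase 2 = xyExponent (s 0, s 1) := by
  ext j; fin_cases j <;> simp [xyExponent]

noncomputable def exponents (d : ℕ) : Set (Fin 3 →₀ ℕ) :=
  {xyExponent (d, 0), xyExponent (d - 1, 1), xyExponent (1, d - 1), xyExponent (0, d),
    xyExponent (2, d - 2) + Finsupp.single 2 1}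

theorem generators_eq_monomial_image (K : Type*) [Field K] (d : ℕ) :
    ({(X 0 : MvPolynomial (Fin 3) K) ^ d, X 0 ^ (d - 1) * X 1, X 0 * X 1 ^ (d - 1), X 1 ^ d,
      X 0 ^ 2 * X 1 ^ (d - 2) * X 2} : Set (MvPolynomial (Fin 3) K)) =
      (fun s => monomial s (1 : K)) '' exponents d := by
  simp [exponents, Set.image_insert_eq, monomial_add_single, monomial_xyExponent]

theorem xyExponent_image_zFreeExponents_subset (d : ℕ) :
    xyExponent '' zFreeExponents d ⊆ exponents d := by
  rintro _ ⟨p, hp, rfl⟩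
  rcases hp with rfl | rfl | rfl | rfl <;> simp [exponents]

theorem apply_zero_add_apply_one_of_mem_nsmul_exponents {d n : ℕ} (hd : 2 ≤ d)
    {s : Fin 3 →₀ ℕ} (hs : s ∈ n • exponents d) : s 0 + s 1 = n * d := by
  let deg : (Fin 3 →₀ ℕ) →+ ℕ := Finsupp.applyAddHom 0 + Finsupp.applyAddHom 1
  have hdeg : deg '' exponents d ⊆ {d} := by
    rintro _ ⟨t, ht, rfl⟩
    rcases ht with rfl | rfl | rfl | rfl | rfl <;> simp [deg, xyExponent] <;> omega
  have h := Set.mem_image_of_mem deg hs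
  rw [Set.image_nsmul] at h
  simpa [deg, mul_comm] using Set.nsmul_subset_nsmul_left hdeg h

theorem erase_two_mem_nsmul_exponents {d n : ℕ} (hd : 2 ≤ d) (hn : d - 2 ≤ n)
    {s : Fin 3 →₀ ℕ} (hs : s ∈ n • exponents d) : s.erase 2 ∈ n • exponents d := by
  rw [erase_two_eq_xyExponent]
  have h := Set.mem_image_of_mem xyExponent (mk_mem_nsmul_zFreeExponents (by omega) hn
    (apply_zero_add_apply_one_of_mem_nsmul_exponents hd hs))
  rw [Set.image_nsmul] at h
  exact Set.nsmul_subset_nsmul_left (xyExponent_image_zFreeExponents_subset d) h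

end SaturatedPowers

/-- For `d ≥ 4` and `I = (x^d, x^{d-1}y, xy^{d-1}, y^d, x²y^{d-2}z)` in `K[x,y,z]`,
`I^n` is saturated with respect to `(x,y,z)` for all `n ≥ d-2`:
`I^n : (x,y,z)^∞ = I^n`. -/
theorem stmt_13 {K : Type*} [Field K] (d : ℕ) (hd : 4 ≤ d) (n : ℕ) (hn : d - 2 ≤ n) :
    (⨆ k : ℕ,
        Submodule.colon
          ((Ideal.span {(X 0 : MvPolynomial (Fin 3) K) ^ d,
              X 0 ^ (d - 1) * X 1, X 0 * X 1 ^ (d - 1), X 1 ^ d,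
              X 0 ^ 2 * X 1 ^ (d - 2) * X 2}) ^ n)
          (((Ideal.span {(X 0 : MvPolynomial (Fin 3) K), X 1, X 2}) ^ k :
            Ideal (MvPolynomial (Fin 3) K)) : Set (MvPolynomial (Fin 3) K))) =
      (Ideal.span {(X 0 : MvPolynomial (Fin 3) K) ^ d,
          X 0 ^ (d - 1) * X 1, X 0 * X 1 ^ (d - 1), X 1 ^ d,
          X 0 ^ 2 * X 1 ^ (d - 2) * X 2}) ^ n := by
  rw [SaturatedPowers.generators_eq_monomial_image, span_monomial_image_pow]
  refine Ideal.iSup_colon_pow_eq_self (a := X 2) (Ideal.subset_span (by simp)) fun f hf => ?_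
  exact mem_of_X_mul_mem_span_monomial_image (fun s hs =>
    ⟨_, SaturatedPowers.erase_two_mem_nsmul_exponents (by omega) hn hs, le_rfl⟩) hf
end

section
/- Let I be the monomial ideal I = (x^d, x^{d-1}y, xy^{d-1}, y^d, x^2 y^{d-2} z) in K[x,y,z] with d ≥ 5. Then for n < d-2, the maximal ideal (x,y,z) is an associated prime of I^{n-1}/I^n (equivalently I^n : (x,y,z)^∞ ≠ I^n). -/
/-!
Write `d = c + 2` and `n = m + 1`. The monomial `w = x^c y^{m(c+1)+c}` is divisible by
`(xy^{c+1})^m`, so `w ∈ I^m`, and when `m + 2 ≤ c` each of `xw`, `yw`, `zw` is divisible by a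
product of `m + 1` generators. But `w ∉ I^{m+1}`: a product of `k` generators divisible neither by
`x^{c+1}` nor by `z` involves only `xy^{c+1}` and `y^{c+2}`, so has `y`-degree at least `k(c+1)`,
more than `w` has. Hence `(x,y,z)` annihilates the nonzero class of `w` in `I^m/I^{m+1}`, and
`w ∈ (I^{m+1} : (x,y,z)) \ I^{m+1}`.
-/

open MvPolynomial Pointwise Finsupp

section AssociatedPrimes
variable {R M : Type*} [CommRing R] [AddCommGroup M] [Module R M]

theorem Submodule.mem_associatedPrimes_quotient_of_le_colon {𝔪 : Ideal R} (h𝔪 : 𝔪.IsMaximal)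
    {N N' : Submodule R M} {w : M} (hw : w ∈ N) (hw' : w ∉ N') (h : 𝔪 ≤ N'.colon {w}) :
    𝔪 ∈ associatedPrimes R (N ⧸ N'.comap N.subtype) := by
  have hcolon : (⊥ : Submodule R (N ⧸ N'.comap N.subtype)).colon {Submodule.Quotient.mk ⟨w, hw⟩}
      = N'.colon {w} := by
    ext r
    simp only [mem_colon_singleton, mem_bot, ← Quotient.mk_smul, Quotient.mk_eq_zero, mem_comap,
      coe_subtype, SetLike.val_smul]
  have hne : N'.colon {w} ≠ ⊤ := fun htop ↦
    hw' (one_smul R w ▸ mem_colon_singleton.1 ((Ideal.eq_top_iff_one _).1 htop))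
  refine ⟨h𝔪.isPrime, Submodule.Quotient.mk ⟨w, hw⟩, ?_⟩
  rw [hcolon]
  exact h𝔪.eq_of_le (Ideal.radical_eq_top.not.2 hne) (h.trans Ideal.le_radical)

theorem Ideal.iSup_colon_pow_ne_self_of_le_colon {J 𝔪 : Ideal R} {w : R} (hw : w ∉ J)
    (h : 𝔪 ≤ J.colon {w}) : ⨆ k : ℕ, J.colon ((𝔪 ^ k : Ideal R) : Set R) ≠ J := by
  refine fun heq ↦ hw (heq ▸ Submodule.mem_iSup_of_mem 1 ?_)
  rw [pow_one, Submodule.mem_colon]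
  intro s hs
  simpa [mul_comm] using Submodule.mem_colon_singleton.1 (h hs)

end AssociatedPrimes

namespace MvPolynomial
variable {σ R : Type*}

theorem ker_constantCoeff [CommSemiring R] :
    RingHom.ker (constantCoeff : MvPolynomial σ R →+* R) = Ideal.span (Set.range X) := by
  ext p
  rw [← Set.image_univ, mem_ideal_span_X_image, RingHom.mem_ker, constantCoeff_eq]
  refine ⟨fun h m hm ↦ ?_, fun h ↦ by_contra fun h0 ↦ ?_⟩
  · obtain ⟨i, hi⟩ := Finsupp.ne_iff.1 (ne_of_mem_of_not_mem hm (notMem_support_iff.2 h))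
    exact ⟨i, trivial, hi⟩
  · obtain ⟨i, -, hi⟩ := h 0 (mem_support_iff.2 h0)
    exact hi rfl

theorem isMaximal_span_range_X {K : Type*} [Field K] :
    (Ideal.span (Set.range X) : Ideal (MvPolynomial σ K)).IsMaximal := by
  rw [← ker_constantCoeff]
  exact RingHom.ker_isMaximal_of_surjective _ fun k ↦ ⟨C k, constantCoeff_C _ _⟩

section CommSemiring
variable [CommSemiring R]

theorem span_monomial_mul_span_monomial (A B : Set (σ →₀ ℕ)) :
    Ideal.span ((monomial · (1 : R)) '' A) * Ideal.span ((monomial · (1 : R)) '' B) =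
      Ideal.span ((monomial · (1 : R)) '' (A + B)) := by
  rw [Ideal.span_mul_span', ← Set.image2_mul, ← Set.image2_add, Set.image_image2]
  simp only [Set.image2_image_left, Set.image2_image_right, monomial_mul, mul_one]

theorem span_monomial_pow_le {S : Set (σ →₀ ℕ)} {U : ℕ → Set (σ →₀ ℕ)}
    (h0 : 0 ∈ U 0) (hU : ∀ k, U k + S ⊆ U (k + 1)) (k : ℕ) :
    Ideal.span ((monomial · (1 : R)) '' S) ^ k ≤ Ideal.span ((monomial · (1 : R)) '' U k) := by
  induction k with
  | zero =>
    rw [pow_zero, Ideal.one_eq_top, top_le_iff, Ideal.eq_top_iff_one]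
    exact Ideal.subset_span ⟨0, h0, by simp [monomial_zero']⟩
  | succ k ih =>
    calc _ ≤ Ideal.span ((monomial · (1 : R)) '' U k) * Ideal.span ((monomial · (1 : R)) '' S) :=
          by rw [pow_succ]; exact Ideal.mul_mono_left ih
      _ = Ideal.span ((monomial · (1 : R)) '' (U k + S)) := span_monomial_mul_span_monomial _ _
      _ ≤ _ := Ideal.span_mono (Set.image_mono (hU k))

theorem monomial_one_mem_span_monomial_iff [Nontrivial R] {e : σ →₀ ℕ} {U : Set (σ →₀ ℕ)} :
    monomial e (1 : R) ∈ Ideal.span ((monomial · (1 : R)) '' U) ↔ ∃ u ∈ U, u ≤ e := by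
  classical
  rw [mem_ideal_span_monomial_image, support_monomial, if_neg one_ne_zero]
  simp

end CommSemiring

end MvPolynomial

section IdealI
variable (K : Type*) [CommSemiring K] (c : ℕ)

/-- The ideal `I` of the statement for `d = c + 2`, which avoids truncated subtraction. -/
noncomputable def idealI : Ideal (MvPolynomial (Fin 3) K) :=
  Ideal.span {X 0 ^ (c + 2), X 0 ^ (c + 1) * X 1, X 0 * X 1 ^ (c + 1), X 1 ^ (c + 2),
    X 0 ^ 2 * X 1 ^ c * X 2}

def idealIExponents : Set (Fin 3 →₀ ℕ) :=
  {single 0 (c + 2), single 0 (c + 1) + single 1 1, single 0 1 + single 1 (c + 1),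
    single 1 (c + 2), single 0 2 + single 1 c + single 2 1}

theorem idealI_eq_span_monomial :
    idealI K c = Ideal.span ((monomial · (1 : K)) '' idealIExponents c) := by
  simp only [idealI, idealIExponents, Set.image_insert_eq, Set.image_singleton, X, monomial_pow,
    monomial_mul, one_pow, mul_one, smul_single_one]

def idealIPowExponents (k : ℕ) : Set (Fin 3 →₀ ℕ) :=
  {e | c + 1 ≤ e 0 ∨ 1 ≤ e 2 ∨ k * (c + 1) ≤ e 1}

theorem idealIPowExponents_add_subset (k : ℕ) :
    idealIPowExponents c k + idealIExponents c ⊆ idealIPowExponents c (k + 1) := by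
  rintro _ ⟨e, he, g, hg, rfl⟩
  simp only [idealIExponents, Set.mem_insert_iff, Set.mem_singleton_iff] at hg
  simp only [idealIPowExponents, Set.mem_ofPred_eq, add_one_mul] at he ⊢
  rcases hg with rfl | rfl | rfl | rfl | rfl <;>
    simp only [Finsupp.add_apply, single_apply, Fin.reduceEq, ↓reduceIte] <;> omega

theorem idealI_pow_le (k : ℕ) :
    idealI K c ^ k ≤ Ideal.span ((monomial · (1 : K)) '' idealIPowExponents c k) := by
  rw [idealI_eq_span_monomial]
  exact span_monomial_pow_le (by simp [idealIPowExponents]) (idealIPowExponents_add_subset c) k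

noncomputable def idealIWitness (m : ℕ) : MvPolynomial (Fin 3) K :=
  X 0 ^ c * X 1 ^ (m * (c + 1) + c)

theorem idealIWitness_notMem [Nontrivial K] (m : ℕ) :
    idealIWitness K c m ∉ idealI K c ^ (m + 1) := by
  intro h
  have hw : idealIWitness K c m = monomial (single 0 c + single 1 (m * (c + 1) + c)) 1 := by
    rw [idealIWitness, X_pow_eq_monomial, X_pow_eq_monomial, monomial_mul, one_mul]
  obtain ⟨u, hu, hle⟩ := monomial_one_mem_span_monomial_iff.1 (hw ▸ idealI_pow_le K c (m + 1) h)
  have h0 := hle 0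
  have h1 := hle 1
  have h2 := hle 2
  simp only [Finsupp.add_apply, single_apply, Fin.reduceEq, ↓reduceIte] at h0 h1 h2
  simp only [idealIPowExponents, Set.mem_ofPred_eq, add_one_mul] at hu
  omega

variable {K c}

theorem idealIWitness_mem_pow {m : ℕ} (hm : m ≤ c) : idealIWitness K c m ∈ idealI K c ^ m := by
  obtain ⟨t, rfl⟩ := Nat.exists_eq_add_of_le hm
  have hxy : X 0 * X 1 ^ (m + t + 1) ∈ idealI K (m + t) := Ideal.subset_span (by simp)
  have : idealIWitness K (m + t) m = (X 0 * X 1 ^ (m + t + 1)) ^ m * (X 0 ^ t * X 1 ^ (m + t)) := by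
    rw [idealIWitness]; ring
  rw [this]
  exact Ideal.mul_mem_right _ _ (Ideal.pow_mem_pow hxy m)

theorem span_X_le_colon_idealIWitness {m : ℕ} (hm : m + 2 ≤ c) :
    Ideal.span {X 0, X 1, X 2} ≤ (idealI K c ^ (m + 1)).colon {idealIWitness K c m} := by
  obtain ⟨t, rfl⟩ := Nat.exists_eq_add_of_le hm
  have key {p g h : MvPolynomial (Fin 3) K} (r : MvPolynomial (Fin 3) K)
      (hg : g ∈ idealI K (m + 2 + t)) (hh : h ∈ idealI K (m + 2 + t)) (hp : p = g * h ^ m * r) :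
      p ∈ idealI K (m + 2 + t) ^ (m + 1) :=
    hp ▸ pow_succ' (idealI K _) m ▸
      Ideal.mul_mem_right _ _ (Ideal.mul_mem_mul hg (Ideal.pow_mem_pow hh m))
  rw [Ideal.span_le]
  rintro _ (rfl | rfl | rfl) <;>
    rw [SetLike.mem_coe, Submodule.mem_colon_singleton, smul_eq_mul, idealIWitness]
  · exact key (g := X 0 ^ (m + 2 + t + 1) * X 1) (h := X 1 ^ (m + 2 + t + 2)) (X 1 ^ (t + 1))
      (Ideal.subset_span (by simp)) (Ideal.subset_span (by simp)) (by ring)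
  · exact key (g := X 0 * X 1 ^ (m + 2 + t + 1)) (h := X 0 * X 1 ^ (m + 2 + t + 1))
      (X 0 ^ (t + 1)) (Ideal.subset_span (by simp)) (Ideal.subset_span (by simp)) (by ring)
  · exact key (g := X 0 ^ 2 * X 1 ^ (m + 2 + t) * X 2) (h := X 0 * X 1 ^ (m + 2 + t + 1)) (X 0 ^ t)
      (Ideal.subset_span (by simp)) (Ideal.subset_span (by simp)) (by ring)

end IdealI

theorem stmt_14_general {K : Type*} [Field K] (d : ℕ)
    (n : ℕ) (hn1 : 1 ≤ n) (hn : n < d - 2) :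
    (Ideal.span {(X 0 : MvPolynomial (Fin 3) K), X 1, X 2} ∈
      associatedPrimes (MvPolynomial (Fin 3) K)
        ((↥((Ideal.span {(X 0 : MvPolynomial (Fin 3) K) ^ d,
              X 0 ^ (d - 1) * X 1, X 0 * X 1 ^ (d - 1), X 1 ^ d,
              X 0 ^ 2 * X 1 ^ (d - 2) * X 2}) ^ (n - 1))) ⧸
          Submodule.comap
            ((Ideal.span {(X 0 : MvPolynomial (Fin 3) K) ^ d,
                X 0 ^ (d - 1) * X 1, X 0 * X 1 ^ (d - 1), X 1 ^ d,
                X 0 ^ 2 * X 1 ^ (d - 2) * X 2}) ^ (n - 1)).subtype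
            ((Ideal.span {(X 0 : MvPolynomial (Fin 3) K) ^ d,
                X 0 ^ (d - 1) * X 1, X 0 * X 1 ^ (d - 1), X 1 ^ d,
                X 0 ^ 2 * X 1 ^ (d - 2) * X 2}) ^ n))) ∧
    (⨆ k : ℕ,
        Submodule.colon
          ((Ideal.span {(X 0 : MvPolynomial (Fin 3) K) ^ d,
              X 0 ^ (d - 1) * X 1, X 0 * X 1 ^ (d - 1), X 1 ^ d,
              X 0 ^ 2 * X 1 ^ (d - 2) * X 2}) ^ n)
          (((Ideal.span {(X 0 : MvPolynomial (Fin 3) K), X 1, X 2}) ^ k :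
            Ideal (MvPolynomial (Fin 3) K)) : Set (MvPolynomial (Fin 3) K))) ≠
      (Ideal.span {(X 0 : MvPolynomial (Fin 3) K) ^ d,
          X 0 ^ (d - 1) * X 1, X 0 * X 1 ^ (d - 1), X 1 ^ d,
          X 0 ^ 2 * X 1 ^ (d - 2) * X 2}) ^ n := by
  obtain ⟨m, rfl⟩ : ∃ m, n = m + 1 := ⟨n - 1, by omega⟩
  obtain ⟨c, rfl⟩ : ∃ c, d = c + 2 := ⟨d - 2, by omega⟩
  have hmax : (Ideal.span {X 0, X 1, X 2} : Ideal (MvPolynomial (Fin 3) K)).IsMaximal := by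
    rw [show ({X 0, X 1, X 2} : Set (MvPolynomial (Fin 3) K)) = Set.range X by
      ext; simp [Fin.exists_fin_succ, eq_comm]]
    exact isMaximal_span_range_X
  have hcolon := span_X_le_colon_idealIWitness (K := K) (m := m) (c := c) (by omega)
  exact ⟨Submodule.mem_associatedPrimes_quotient_of_le_colon hmax
      (idealIWitness_mem_pow (by omega)) (idealIWitness_notMem K c m) hcolon,
    Ideal.iSup_colon_pow_ne_self_of_le_colon (idealIWitness_notMem K c m) hcolon⟩

/-- For `d ≥ 5` and `I = (x^d, x^{d-1}y, xy^{d-1}, y^d, x²y^{d-2}z)` in `K[x,y,z]`,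
for `1 ≤ n < d-2` the maximal ideal `(x,y,z)` is an associated prime of
`I^{n-1}/I^n`; equivalently `I^n : (x,y,z)^∞ ≠ I^n`. -/
theorem stmt_14 {K : Type*} [Field K] (d : ℕ) (hd : 5 ≤ d)
    (n : ℕ) (hn1 : 1 ≤ n) (hn : n < d - 2) :
    (Ideal.span {(X 0 : MvPolynomial (Fin 3) K), X 1, X 2} ∈
      associatedPrimes (MvPolynomial (Fin 3) K)
        ((↥((Ideal.span {(X 0 : MvPolynomial (Fin 3) K) ^ d,
              X 0 ^ (d - 1) * X 1, X 0 * X 1 ^ (d - 1), X 1 ^ d,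
              X 0 ^ 2 * X 1 ^ (d - 2) * X 2}) ^ (n - 1))) ⧸
          Submodule.comap
            ((Ideal.span {(X 0 : MvPolynomial (Fin 3) K) ^ d,
                X 0 ^ (d - 1) * X 1, X 0 * X 1 ^ (d - 1), X 1 ^ d,
                X 0 ^ 2 * X 1 ^ (d - 2) * X 2}) ^ (n - 1)).subtype
            ((Ideal.span {(X 0 : MvPolynomial (Fin 3) K) ^ d,
                X 0 ^ (d - 1) * X 1, X 0 * X 1 ^ (d - 1), X 1 ^ d,
                X 0 ^ 2 * X 1 ^ (d - 2) * X 2}) ^ n))) ∧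
    (⨆ k : ℕ,
        Submodule.colon
          ((Ideal.span {(X 0 : MvPolynomial (Fin 3) K) ^ d,
              X 0 ^ (d - 1) * X 1, X 0 * X 1 ^ (d - 1), X 1 ^ d,
              X 0 ^ 2 * X 1 ^ (d - 2) * X 2}) ^ n)
          (((Ideal.span {(X 0 : MvPolynomial (Fin 3) K), X 1, X 2}) ^ k :
            Ideal (MvPolynomial (Fin 3) K)) : Set (MvPolynomial (Fin 3) K))) ≠
      (Ideal.span {(X 0 : MvPolynomial (Fin 3) K) ^ d,
          X 0 ^ (d - 1) * X 1, X 0 * X 1 ^ (d - 1), X 1 ^ d,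
          X 0 ^ 2 * X 1 ^ (d - 2) * X 2}) ^ n :=
  stmt_14_general d n hn1 hn
end

section
/- Let I = (f_1,...,f_s) be an ideal of a commutative ring R, n > 0, and suppose x ∈ I^{n+m} : (f_1^m,...,f_s^m) for some m ≥ 0. Then x belongs to the Ratliff–Rush closure Ĩ^n = ∪_{k≥1} (I^{n+k} : I^k). -/
/-!
By pigeonhole, a product of `s * m + m + 1` generators of `I = (f_1, …, f_s)` contains some
`f_i` at least `m` times, so `I ^ (s * m + m + 1) ≤ (f_1^m, …, f_s^m) * I ^ (s * m + 1)`.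
Multiplying `x * (f_1^m, …, f_s^m) ≤ I ^ (n + m)` by `I ^ (s * m + 1)` then puts `x` in
`I ^ (n + (s * m + m + 1)) : I ^ (s * m + m + 1)`.
-/

open Finset

namespace Ideal

variable {R : Type*} [CommRing R]

theorem colon_le_colon_mul (N J L : Ideal R) :
    N.colon (J : Set R) ≤ (N * L).colon ((J * L : Ideal R) : Set R) := by
  intro x hx
  refine Submodule.mem_colon.mpr fun p hp => ?_
  refine Submodule.mul_induction_on hp (fun a ha b hb => ?_) fun a b ha hb => ?_
  · rw [smul_eq_mul, ← mul_assoc]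
    exact mul_mem_mul (Submodule.mem_colon.mp hx a ha) hb
  · rw [smul_add]
    exact add_mem ha hb

variable {ι : Type*} [Fintype ι]

theorem prod_mem_span_pow_mul_span_pow (f : ι → R) {k m : ℕ}
    (hk : Fintype.card ι * m < k + m) (c : Fin (k + m) → ι) :
    ∏ j, f (c j) ∈ span (Set.range fun i => f i ^ m) * span (Set.range f) ^ k := by
  classical
  obtain ⟨i, hi⟩ : ∃ i, m < #{j | c j = i} :=
    Fintype.exists_lt_card_fiber_of_mul_lt_card c (by rwa [Fintype.card_fin])
  obtain ⟨T, hT, hTcard⟩ := exists_subset_card_eq hi.le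
  have hT_prod : ∏ j ∈ T, f (c j) = f i ^ m := by
    rw [prod_congr rfl fun j hj => by rw [(mem_filter.mp (hT hj)).2], prod_const, hTcard]
  have hTc_card : #Tᶜ = k := by rw [card_compl, hTcard, Fintype.card_fin, Nat.add_sub_cancel]
  have hTc_prod : ∏ j ∈ Tᶜ, f (c j) ∈ span (Set.range f) ^ k := by
    simpa only [prod_const, hTc_card] using
      prod_mem_prod (s := Tᶜ) (I := fun _ => span (Set.range f)) fun j _ => subset_span ⟨c j, rfl⟩
  rw [← prod_mul_prod_compl T, hT_prod]
  exact mul_mem_mul (subset_span ⟨i, rfl⟩) hTc_prod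

theorem span_range_pow_le_span_pow_mul_span_pow (f : ι → R) {k m : ℕ}
    (hk : Fintype.card ι * m < k + m) :
    span (Set.range f) ^ (k + m) ≤ span (Set.range fun i => f i ^ m) * span (Set.range f) ^ k := by
  rw [span, Submodule.span_pow, Submodule.span_le, ← span]
  intro _ hw
  obtain ⟨g, rfl⟩ := Set.mem_pow.mp hw
  choose c hc using fun j => (g j).2
  simpa only [SetLike.mem_coe, List.prod_ofFn, ← hc] using prod_mem_span_pow_mul_span_pow f hk c

end Ideal

theorem stmt_18_general {R : Type*} [CommRing R] {s : ℕ} (f : Fin s → R)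
    (n m : ℕ) (x : R)
    (h : x ∈ Submodule.colon ((Ideal.span (Set.range f)) ^ (n + m))
      (Ideal.span (Set.range fun i => f i ^ m))) :
    ∃ k : ℕ, x ∈ Submodule.colon ((Ideal.span (Set.range f)) ^ (n + (k + 1)))
      (((Ideal.span (Set.range f)) ^ (k + 1) : Ideal R) : Set R) := by
  set I := Ideal.span (Set.range f)
  have hpow : I ^ (s * m + 1 + m) ≤ Ideal.span (Set.range fun i => f i ^ m) * I ^ (s * m + 1) :=
    Ideal.span_range_pow_le_span_pow_mul_span_pow f (by rw [Fintype.card_fin]; omega)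
  have hx := Ideal.colon_le_colon_mul _ _ (I ^ (s * m + 1)) h
  refine ⟨s * m + m, Submodule.colon_mono ?_ ?_ hx⟩
  · rw [← pow_add, show n + m + (s * m + 1) = n + (s * m + m + 1) by ring]
  · rwa [add_right_comm]

/-- If `I = (f_1,…,f_s)`, `n > 0` and `x ∈ I^{n+m} : (f_1^m,…,f_s^m)` for some `m ≥ 0`,
then `x` lies in the Ratliff–Rush closure `Ĩ^n = ∪_{k≥1} (I^{n+k} : I^k)`. -/
theorem stmt_18 {R : Type*} [CommRing R] {s : ℕ} (f : Fin s → R)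
    (n m : ℕ) (hn : 0 < n) (x : R)
    (h : x ∈ Submodule.colon ((Ideal.span (Set.range f)) ^ (n + m))
      (Ideal.span (Set.range fun i => f i ^ m))) :
    ∃ k : ℕ, x ∈ Submodule.colon ((Ideal.span (Set.range f)) ^ (n + (k + 1)))
      (((Ideal.span (Set.range f)) ^ (k + 1) : Ideal R) : Set R) :=
  stmt_18_general f n m x h
end
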